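/- Let α > 1 and z > 0, and let ρ, ρ₁, ρ₂, σ, σ₁, σ₂ be n×n positive semidefinite complex matrices. (a) If z ≥ α, ρ₁ ≤ ρ₂ in the Loewner order, and the support of ρ₂ is contained in the support of σ (i.e., σv = 0 implies ρ₂v = 0), then Q_{α,z}(ρ₁‖σ) ≤ Q_{α,z}(ρ₂‖σ). (b) If z ≥ α − 1, σ₁ ≤ σ₂ in the Loewner order, and the support of ρ is contained in the support of σ₁, then Q_{α,z}(ρ‖σ₁) ≥ Q_{α,z}(ρ‖σ₂). -/

import Mathlib

open Matrix
open scoped ComplexOrder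

/-- Real power of a positive semidefinite matrix via the spectral decomposition,
applying `x ^ t` (real `rpow`, so with the convention `0 ^ t = 0` for `t ≠ 0`)
to the eigenvalues; returns `0` if the matrix is not Hermitian. -/
noncomputable def mpow {n : Type*} [Fintype n] [DecidableEq n]
    (A : Matrix n n ℂ) (t : ℝ) : Matrix n n ℂ :=
  if hA : A.IsHermitian then
    (hA.eigenvectorUnitary : Matrix n n ℂ) *
      Matrix.diagonal (fun i => ((hA.eigenvalues i ^ t : ℝ) : ℂ)) *
      star (hA.eigenvectorUnitary : Matrix n n ℂ)
  else 0


/-- The α-z-Rényi quantity `Q_{α,z}(ρ‖σ) = Tr((σ^((1−α)/2z) ρ^(α/z) σ^((1−α)/2z))^z)`. -/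
noncomputable def Qaz {n : Type*} [Fintype n] [DecidableEq n]
    (α z : ℝ) (ρ σ : Matrix n n ℂ) : ℝ :=
  ((mpow (mpow σ ((1 - α) / (2 * z)) * mpow ρ (α / z) * mpow σ ((1 - α) / (2 * z))) z).trace).re

/-!
Both inequalities come from the monotonicity of `M ↦ Tr M ^ z` in the Loewner order, which
follows from Weyl's monotonicity of the ordered eigenvalues.

(a) For `p = α / z ∈ (0, 1]` the Löwner–Heinz inequality gives `ρ₁ ^ p ≤ ρ₂ ^ p`, and sandwiching
by `σ ^ ((1 - α) / 2z)` preserves the order.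

(b) Since `Tr f (X Xᴴ) = Tr f (Xᴴ X)`, `Q_{α,z}(ρ‖σ) = Tr (R σ ^ (-t) R) ^ z` with
`R = ρ ^ (α / 2z)` and `t = (α - 1) / z ∈ (0, 1]`. For invertible `σ₁ ≤ σ₂` one has
`σ₂ ^ (-t) ≤ σ₁ ^ (-t)`: invert the Löwner–Heinz inequality `σ₁ ^ t ≤ σ₂ ^ t`. In general apply
this to `σᵢ + ε` and let `ε → 0`; after sandwiching by `R` the limit exists, because the support
condition makes `R` vanish on the kernels of `σ₁` and `σ₂`, where `(x + ε) ^ (-t)` blows up.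
-/

open Module Filter Topology
open scoped MatrixOrder

namespace OrthonormalBasis

variable {ι 𝕜 E : Type*} [Fintype ι] [RCLike 𝕜] [NormedAddCommGroup E] [InnerProductSpace 𝕜 E]

lemma inner_eq_zero_of_mem_span_image (b : OrthonormalBasis ι 𝕜 E) {s : Set ι} {x : E}
    (hx : x ∈ Submodule.span 𝕜 (b '' s)) {j : ι} (hj : j ∉ s) : inner 𝕜 (b j) x = 0 := by
  have hle : Submodule.span 𝕜 (b '' s) ≤ (𝕜 ∙ b j)ᗮ := by
    rw [Submodule.span_le]
    rintro _ ⟨i, hi, rfl⟩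
    exact Submodule.mem_orthogonal_singleton_iff_inner_right.2
      (b.orthonormal.2 (ne_of_mem_of_not_mem hi hj).symm)
  exact Submodule.mem_orthogonal_singleton_iff_inner_right.1 (hle hx)

lemma finrank_span_image (b : OrthonormalBasis ι 𝕜 E) (s : Finset ι) :
    finrank 𝕜 (Submodule.span 𝕜 (b '' s)) = s.card := by
  rw [Set.image_eq_range, ← Fintype.card_coe]
  exact finrank_span_eq_card (b.orthonormal.linearIndependent.comp _ Subtype.val_injective)

end OrthonormalBasis

namespace LinearMap.IsSymmetric

variable {𝕜 E : Type*} [RCLike 𝕜] [NormedAddCommGroup E] [InnerProductSpace 𝕜 E]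
  [FiniteDimensional 𝕜 E] {T S : E →ₗ[𝕜] E} {n : ℕ} (hT : T.IsSymmetric) (hn : finrank 𝕜 E = n)

lemma re_inner_apply_self_eq_sum (x : E) :
    RCLike.re (inner 𝕜 (T x) x) =
      ∑ i, hT.eigenvalues hn i * ‖inner 𝕜 (hT.eigenvectorBasis hn i) x‖ ^ 2 := by
  rw [← (hT.eigenvectorBasis hn).sum_inner_mul_inner, map_sum]
  refine Finset.sum_congr rfl fun i _ => ?_
  rw [hT, apply_eigenvectorBasis, inner_smul_right, mul_assoc, RCLike.re_ofReal_mul,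
    ← inner_conj_symm x, RCLike.conj_mul, ← RCLike.ofReal_pow, RCLike.ofReal_re]

lemma le_re_inner_of_mem_span {s : Set (Fin n)} {c : ℝ} (hc : ∀ i ∈ s, c ≤ hT.eigenvalues hn i)
    {x : E} (hx : x ∈ Submodule.span 𝕜 (hT.eigenvectorBasis hn '' s)) :
    c * ‖x‖ ^ 2 ≤ RCLike.re (inner 𝕜 (T x) x) := by
  rw [hT.re_inner_apply_self_eq_sum hn, ← (hT.eigenvectorBasis hn).sum_sq_norm_inner_right,
    Finset.mul_sum]
  refine Finset.sum_le_sum fun i _ => ?_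
  by_cases hi : i ∈ s
  · exact mul_le_mul_of_nonneg_right (hc i hi) (by positivity)
  · simp [(hT.eigenvectorBasis hn).inner_eq_zero_of_mem_span_image hx hi]

lemma re_inner_le_of_mem_span {s : Set (Fin n)} {c : ℝ} (hc : ∀ i ∈ s, hT.eigenvalues hn i ≤ c)
    {x : E} (hx : x ∈ Submodule.span 𝕜 (hT.eigenvectorBasis hn '' s)) :
    RCLike.re (inner 𝕜 (T x) x) ≤ c * ‖x‖ ^ 2 := by
  rw [hT.re_inner_apply_self_eq_sum hn, ← (hT.eigenvectorBasis hn).sum_sq_norm_inner_right,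
    Finset.mul_sum]
  refine Finset.sum_le_sum fun i _ => ?_
  by_cases hi : i ∈ s
  · exact mul_le_mul_of_nonneg_right (hc i hi) (by positivity)
  · simp [(hT.eigenvectorBasis hn).inner_eq_zero_of_mem_span_image hx hi]

/-- **Weyl's monotonicity theorem**. -/
theorem eigenvalues_le_eigenvalues (hS : S.IsSymmetric) (hTS : T ≤ S) (k : Fin n) :
    hT.eigenvalues hn k ≤ hS.eigenvalues hn k := by
  set V := Submodule.span 𝕜 (hT.eigenvectorBasis hn '' ↑(Finset.Iic k))
  set W := Submodule.span 𝕜 (hS.eigenvectorBasis hn '' ↑(Finset.Ici k))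
  have hdim : finrank 𝕜 E < finrank 𝕜 V + finrank 𝕜 W := by
    rw [(hT.eigenvectorBasis hn).finrank_span_image, (hS.eigenvectorBasis hn).finrank_span_image,
      Fin.card_Iic, Fin.card_Ici, hn]
    omega
  obtain ⟨x, ⟨hxV, hxW⟩, hx⟩ : ∃ x ∈ V ⊓ W, x ≠ 0 :=
    Submodule.exists_mem_ne_zero_of_ne_bot fun h =>
      hdim.not_ge (Submodule.finrank_add_finrank_le_of_disjoint (disjoint_iff.2 h))
  have hT_lower := hT.le_re_inner_of_mem_span hn
    (fun i hi => hT.eigenvalues_antitone hn (Finset.mem_Iic.1 hi)) hxV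
  have hS_upper := hS.re_inner_le_of_mem_span hn
    (fun i hi => hS.eigenvalues_antitone hn (Finset.mem_Ici.1 hi)) hxW
  have hTS_x := ((LinearMap.le_def T S).1 hTS).re_inner_nonneg_left x
  rw [LinearMap.sub_apply, inner_sub_left, map_sub] at hTS_x
  refine le_of_mul_le_mul_right ?_ (by positivity : 0 < ‖x‖ ^ 2)
  linarith

end LinearMap.IsSymmetric

namespace CFC

variable {A : Type*} [CStarAlgebra A] [PartialOrder A] [StarOrderedRing A]

lemma rpow_neg_le_rpow_neg {a b : A} (hab : a ≤ b) (ha : IsStrictlyPositive a) {t : ℝ}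
    (ht : t ∈ Set.Icc 0 1) : b ^ (-t) ≤ a ^ (-t) := by
  rcases ht.1.eq_or_lt with rfl | ht₀
  · rw [neg_zero, rpow_zero b (ha.nonneg.trans hab), rpow_zero a ha.nonneg]
  · rw [← inverse_rpow b t ht₀.ne' (ha.of_le hab), ← inverse_rpow a t ht₀.ne' ha]
    exact CStarAlgebra.ringInverse_le_ringInverse (rpow_le_rpow ht hab)
      (IsStrictlyPositive.rpow a t ha)

end CFC

namespace Matrix

variable {𝕜 n : Type*} [RCLike 𝕜] [Fintype n]

lemma mulVec_eq_zero_of_le {A B : Matrix n n 𝕜} (hA : 0 ≤ A) (hAB : A ≤ B) {v : n → 𝕜}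
    (hv : B *ᵥ v = 0) : A *ᵥ v = 0 := by
  have hA' := nonneg_iff_posSemidef.1 hA
  refine (hA'.dotProduct_mulVec_zero_iff v).1 (le_antisymm ?_ (hA'.dotProduct_mulVec_nonneg v))
  have := (le_iff.1 hAB).dotProduct_mulVec_nonneg v
  rwa [sub_mulVec, dotProduct_sub, hv, dotProduct_zero, zero_sub, neg_nonneg] at this

variable [DecidableEq n]

lemma IsHermitian.trace_cfc {A : Matrix n n 𝕜} (hA : A.IsHermitian) (f : ℝ → ℝ) :
    (cfc f A).trace = ∑ i, (f (hA.eigenvalues i) : 𝕜) := by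
  rw [hA.cfc_eq, IsHermitian.cfc, Unitary.conjStarAlgAut_apply, trace_mul_cycle,
    Unitary.coe_star_mul_self, one_mul, trace_diagonal]
  rfl

lemma IsHermitian.trace_cfc_eq_sum_eigenvalues₀ {A : Matrix n n 𝕜} (hA : A.IsHermitian)
    (f : ℝ → ℝ) : (cfc f A).trace = ∑ k, (f (hA.eigenvalues₀ k) : 𝕜) := by
  rw [hA.trace_cfc]
  exact Equiv.sum_comp (Fintype.equivOfCardEq (Fintype.card_fin _)).symm
    (fun k => (f (hA.eigenvalues₀ k) : 𝕜))

lemma PosSemidef.eigenvalues₀_nonneg {A : Matrix n n 𝕜} (hA : A.PosSemidef)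
    (k : Fin (Fintype.card n)) : 0 ≤ hA.1.eigenvalues₀ k := by
  simpa [IsHermitian.eigenvalues] using
    hA.eigenvalues_nonneg (Fintype.equivOfCardEq (Fintype.card_fin _) k)

lemma IsHermitian.eigenvalues₀_le_eigenvalues₀ {A B : Matrix n n 𝕜} (hA : A.IsHermitian)
    (hB : B.IsHermitian) (hAB : A ≤ B) (k : Fin (Fintype.card n)) :
    hA.eigenvalues₀ k ≤ hB.eigenvalues₀ k :=
  LinearMap.IsSymmetric.eigenvalues_le_eigenvalues _ _ _
    (by rwa [LinearMap.le_def, ← map_sub, isPositive_toEuclideanLin_iff]) k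

lemma re_trace_cfc_le_of_le {A B : Matrix n n 𝕜} (hA : 0 ≤ A) (hAB : A ≤ B) {f : ℝ → ℝ}
    (hf : MonotoneOn f (Set.Ici 0)) :
    RCLike.re (cfc f A).trace ≤ RCLike.re (cfc f B).trace := by
  have hA' := nonneg_iff_posSemidef.1 hA
  have hB' := nonneg_iff_posSemidef.1 (hA.trans hAB)
  simp only [hA'.1.trace_cfc_eq_sum_eigenvalues₀, hB'.1.trace_cfc_eq_sum_eigenvalues₀, map_sum,
    RCLike.ofReal_re]
  exact Finset.sum_le_sum fun k _ => hf (hA'.eigenvalues₀_nonneg k) (hB'.eigenvalues₀_nonneg k)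
    (hA'.1.eigenvalues₀_le_eigenvalues₀ hB'.1 hAB k)

lemma IsHermitian.trace_cfc_eq_of_charpoly_eq {A B : Matrix n n 𝕜} (hA : A.IsHermitian)
    (hB : B.IsHermitian) (h : A.charpoly = B.charpoly) (f : ℝ → ℝ) :
    (cfc f A).trace = (cfc f B).trace := by
  rw [hA.trace_cfc, hB.trace_cfc, (hA.eigenvalues_eq_eigenvalues_iff hB).2 h]

lemma trace_cfc_mul_conjTranspose_self (X : Matrix n n 𝕜) (f : ℝ → ℝ) :
    (cfc f (X * Xᴴ)).trace = (cfc f (Xᴴ * X)).trace :=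
  (isHermitian_mul_conjTranspose_self X).trace_cfc_eq_of_charpoly_eq
    (isHermitian_conjTranspose_mul_self X) (charpoly_mul_comm _ _) f

lemma cfc_mulVec_eq_zero {A : Matrix n n 𝕜} (hA : A.IsHermitian) {f : ℝ → ℝ} (hf : f 0 = 0)
    {v : n → 𝕜} (hv : A *ᵥ v = 0) : cfc f A *ᵥ v = 0 := by
  have hfac : cfc f A = cfc (fun x => f x / x) A * A := by
    conv_rhs => rhs; rw [← cfc_id' ℝ A hA.isSelfAdjoint]
    rw [← cfc_mul _ _ A (finite_real_spectrum.continuousOn _) (finite_real_spectrum.continuousOn _)]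
    refine cfc_congr fun x _ => ?_
    rcases eq_or_ne x 0 with rfl | hx
    · simp [hf]
    · exact (div_mul_cancel₀ _ hx).symm
  rw [hfac, ← mulVec_mulVec, hv, mulVec_zero]

lemma rpow_mulVec_eq_zero {A : Matrix n n 𝕜} (hA : 0 ≤ A) {t : ℝ} (ht : t ≠ 0) {v : n → 𝕜}
    (hv : A *ᵥ v = 0) : A ^ t *ᵥ v = 0 := by
  rw [CFC.rpow_eq_cfc_real hA]
  exact cfc_mulVec_eq_zero (f := (· ^ t)) hA.isSelfAdjoint (Real.zero_rpow ht) hv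

lemma mul_cfc_eq_zero_of_ker_le {A R : Matrix n n 𝕜} (hA : A.IsHermitian)
    (hker : ∀ v, A *ᵥ v = 0 → R *ᵥ v = 0) {f : ℝ → ℝ}
    (hf : ∀ x ∈ spectrum ℝ A, x ≠ 0 → f x = 0) : R * cfc f A = 0 := by
  have hAf : A * cfc f A = 0 := by
    conv_lhs => lhs; rw [← cfc_id' ℝ A hA.isSelfAdjoint]
    rw [← cfc_mul _ _ A (finite_real_spectrum.continuousOn _) (finite_real_spectrum.continuousOn _)]
    refine (cfc_congr fun x hx => ?_).trans (cfc_zero ℝ A)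
    rcases eq_or_ne x 0 with rfl | hx₀
    · simp
    · simp [hf x hx hx₀]
  refine ext_iff_mulVec.2 fun v => ?_
  rw [← mulVec_mulVec, hker _ (by rw [mulVec_mulVec, hAf, zero_mulVec]), zero_mulVec]

lemma mul_cfc_eq_mul_cfc_of_ker_le {A R : Matrix n n 𝕜} (hA : A.IsHermitian)
    (hker : ∀ v, A *ᵥ v = 0 → R *ᵥ v = 0) {f g : ℝ → ℝ}
    (hfg : ∀ x ∈ spectrum ℝ A, x ≠ 0 → f x = g x) : R * cfc f A = R * cfc g A := by
  rw [← sub_eq_zero, ← mul_sub, ← cfc_sub _ _ A (finite_real_spectrum.continuousOn _)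
    (finite_real_spectrum.continuousOn _)]
  exact mul_cfc_eq_zero_of_ker_le hA hker fun x hx hx₀ => sub_eq_zero.2 (hfg x hx hx₀)

lemma tendsto_cfc_of_tendsto {ι : Type*} {l : Filter ι} {F : ι → ℝ → ℝ} {f : ℝ → ℝ}
    {A : Matrix n n 𝕜} (h : ∀ x ∈ spectrum ℝ A, Tendsto (fun i => F i x) l (𝓝 (f x))) :
    Tendsto (fun i => cfc (F i) A) l (𝓝 (cfc f A)) :=
  tendsto_cfc_fun
    (Metric.tendstoUniformlyOn_iff.2 fun ε hε => finite_real_spectrum.eventually_all.2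
      fun x hx => (Metric.tendsto_nhds.1 (h x hx) ε hε).mono fun _ hi => by rwa [dist_comm])
    (Eventually.of_forall fun _ => finite_real_spectrum.continuousOn _)

lemma tendsto_mul_cfc_of_ker_le {A R : Matrix n n 𝕜} (hA : A.IsHermitian)
    (hker : ∀ v, A *ᵥ v = 0 → R *ᵥ v = 0) {ι : Type*} {l : Filter ι} {F : ι → ℝ → ℝ}
    {f : ℝ → ℝ} (h : ∀ x ∈ spectrum ℝ A, x ≠ 0 → Tendsto (fun i => F i x) l (𝓝 (f x))) :
    Tendsto (fun i => R * cfc (F i) A) l (𝓝 (R * cfc f A)) := by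
  let cut : (ℝ → ℝ) → ℝ → ℝ := fun g x => if x = 0 then 0 else g x
  have hcut (g : ℝ → ℝ) : R * cfc (cut g) A = R * cfc g A :=
    mul_cfc_eq_mul_cfc_of_ker_le hA hker fun x _ hx => if_neg hx
  rw [← hcut f]
  refine (tendsto_congr fun i => hcut (F i)).1 ((tendsto_cfc_of_tendsto fun x hx => ?_).const_mul R)
  by_cases hx₀ : x = 0
  · simpa [cut, hx₀] using tendsto_const_nhds
  · simpa [cut, hx₀] using h x hx hx₀

lemma rpow_two_mul {A : Matrix n n 𝕜} (hA : 0 ≤ A) (x : ℝ) : A ^ (2 * x) = A ^ x * A ^ x := by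
  rw [CFC.rpow_eq_cfc_real hA, CFC.rpow_eq_cfc_real hA, ← cfc_mul _ _ A
    (finite_real_spectrum.continuousOn _) (finite_real_spectrum.continuousOn _)]
  refine cfc_congr fun s hs => ?_
  rcases eq_or_ne x 0 with rfl | hx
  · simp
  · rw [two_mul, Real.rpow_add' (spectrum_nonneg_of_nonneg hA hs) (by simpa [← two_mul] using hx)]

lemma add_algebraMap_rpow {A : Matrix n n 𝕜} (hA : 0 ≤ A) {ε : ℝ} (hε : 0 ≤ ε) (s : ℝ) :
    (A + algebraMap ℝ _ ε) ^ s = cfc (fun x => (x + ε) ^ s) A := by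
  have hshift : A + algebraMap ℝ _ ε = cfc (fun x => x + ε) A := by
    rw [cfc_add_const ε (fun x => x) A, cfc_id' ℝ A]
  rw [CFC.rpow_eq_cfc_real (add_nonneg hA (algebraMap_nonneg _ hε)), hshift,
    ← cfc_comp (fun x => x ^ s) (fun x => x + ε) A
      (hg := (finite_real_spectrum.image _).continuousOn _)]
  rfl

end Matrix

open scoped Matrix.Norms.L2Operator

namespace Matrix

variable {n : Type*} [Fintype n] [DecidableEq n]

theorem conj_rpow_neg_le_conj_rpow_neg {σ₁ σ₂ R : Matrix n n ℂ} (hσ₁ : 0 ≤ σ₁) (hσ : σ₁ ≤ σ₂)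
    (hR : IsSelfAdjoint R) (hker : ∀ v, σ₁ *ᵥ v = 0 → R *ᵥ v = 0) {t : ℝ}
    (ht : t ∈ Set.Icc 0 1) : R * σ₂ ^ (-t) * R ≤ R * σ₁ ^ (-t) * R := by
  have hlim {σ : Matrix n n ℂ} (h₀ : 0 ≤ σ) (hk : ∀ v, σ *ᵥ v = 0 → R *ᵥ v = 0) :
      Tendsto (fun ε : ℝ => R * (σ + algebraMap ℝ _ ε) ^ (-t) * R) (𝓝[>] 0)
        (𝓝 (R * σ ^ (-t) * R)) := by
    rw [CFC.rpow_eq_cfc_real h₀]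
    refine ((tendsto_mul_cfc_of_ker_le (F := fun ε x => (x + ε) ^ (-t)) h₀.isSelfAdjoint hk
      fun x hx hx₀ => ?_).mul_const R).congr' ?_
    · have hx : 0 < x := (spectrum_nonneg_of_nonneg h₀ hx).lt_of_ne' hx₀
      have : ContinuousAt (fun ε : ℝ => (x + ε) ^ (-t)) 0 :=
        (continuousAt_const.add continuousAt_id).rpow_const (Or.inl (by simpa using hx.ne'))
      simpa using this.tendsto.mono_left nhdsWithin_le_nhds
    · filter_upwards [self_mem_nhdsWithin] with ε (hε : 0 < ε)
      rw [add_algebraMap_rpow h₀ hε.le]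
  refine le_of_tendsto_of_tendsto (hlim (hσ₁.trans hσ) fun v hv =>
    hker v (mulVec_eq_zero_of_le hσ₁ hσ hv)) (hlim hσ₁ hker) ?_
  filter_upwards [self_mem_nhdsWithin] with ε (hε : 0 < ε)
  exact hR.conjugate_le_conjugate (CFC.rpow_neg_le_rpow_neg (add_le_add hσ le_rfl)
    (IsStrictlyPositive.nonneg_add hσ₁ (isStrictlyPositive_algebraMap hε)) ht)

end Matrix

section Renyi

variable {n : Type*} [Fintype n] [DecidableEq n]

lemma mpow_eq_cfc (A : Matrix n n ℂ) (t : ℝ) : mpow A t = cfc (fun x : ℝ => x ^ t) A := by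
  by_cases hA : A.IsHermitian
  · rw [hA.cfc_eq, IsHermitian.cfc, mpow, dif_pos hA, Unitary.conjStarAlgAut_apply]
    rfl
  · rw [mpow, dif_neg hA, cfc_apply_of_not_predicate A (show ¬IsSelfAdjoint A from hA)]

lemma mpow_eq_rpow {A : Matrix n n ℂ} (hA : 0 ≤ A) (t : ℝ) : mpow A t = A ^ t := by
  rw [mpow_eq_cfc, CFC.rpow_eq_cfc_real hA]

lemma Qaz_eq_re_trace_cfc {ρ σ : Matrix n n ℂ} (hρ : 0 ≤ ρ) (hσ : 0 ≤ σ) (α z : ℝ) :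
    Qaz α z ρ σ = (cfc (fun x : ℝ => x ^ z)
      (σ ^ ((1 - α) / (2 * z)) * ρ ^ (α / z) * σ ^ ((1 - α) / (2 * z)))).trace.re := by
  rw [Qaz, mpow_eq_rpow hσ, mpow_eq_rpow hρ, mpow_eq_cfc]

lemma Qaz_eq_re_trace_cfc_conj {ρ σ : Matrix n n ℂ} (hρ : 0 ≤ ρ) (hσ : 0 ≤ σ) (α z : ℝ) :
    Qaz α z ρ σ = (cfc (fun x : ℝ => x ^ z)
      (ρ ^ (α / (2 * z)) * σ ^ ((1 - α) / z) * ρ ^ (α / (2 * z)))).trace.re := by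
  set R := ρ ^ (α / (2 * z))
  set C := σ ^ ((1 - α) / (2 * z))
  have hR : Rᴴ = R := CFC.rpow_nonneg.isSelfAdjoint
  have hC : Cᴴ = C := CFC.rpow_nonneg.isSelfAdjoint
  have hρR : ρ ^ (α / z) = R * R := by rw [← rpow_two_mul hρ]; ring_nf
  have hσC : σ ^ ((1 - α) / z) = C * C := by rw [← rpow_two_mul hσ]; ring_nf
  have hflip := trace_cfc_mul_conjTranspose_self (C * R) (fun x : ℝ => x ^ z)
  rw [conjTranspose_mul, hR, hC] at hflip
  rw [Qaz_eq_re_trace_cfc hρ hσ, hρR, hσC]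
  simp only [mul_assoc] at hflip ⊢
  rw [hflip]

end Renyi

theorem Qaz_order_relations_alpha_gt_one_general (n : ℕ) (α z : ℝ) (hα : 1 < α) (hz : 0 < z)
    (ρ ρ₁ ρ₂ σ σ₁ σ₂ : Matrix (Fin n) (Fin n) ℂ)
    (hρ : ρ.PosSemidef) (hρ₁ : ρ₁.PosSemidef)
    (hσ : σ.PosSemidef) (hσ₁ : σ₁.PosSemidef) :
    (α ≤ z → (ρ₂ - ρ₁).PosSemidef →
      (∀ v : Fin n → ℂ, σ *ᵥ v = 0 → ρ₂ *ᵥ v = 0) →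
      Qaz α z ρ₁ σ ≤ Qaz α z ρ₂ σ) ∧
    (α - 1 ≤ z → (σ₂ - σ₁).PosSemidef →
      (∀ v : Fin n → ℂ, σ₁ *ᵥ v = 0 → ρ *ᵥ v = 0) →
      Qaz α z ρ σ₂ ≤ Qaz α z ρ σ₁) := by
  rw [← nonneg_iff_posSemidef] at hρ hρ₁ hσ hσ₁
  have hpow : MonotoneOn (fun x : ℝ => x ^ z) (Set.Ici 0) :=
    Real.monotoneOn_rpow_Ici_of_exponent_nonneg hz.le
  have hsa (A : Matrix (Fin n) (Fin n) ℂ) (s : ℝ) : IsSelfAdjoint (A ^ s) :=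
    CFC.rpow_nonneg.isSelfAdjoint
  refine ⟨fun hαz hρ₁₂ _ => ?_, fun hαz hσ₁₂ hker => ?_⟩
  · have hp : α / z ∈ Set.Icc (0 : ℝ) 1 := ⟨div_nonneg (by linarith) hz.le, (div_le_one hz).2 hαz⟩
    rw [Qaz_eq_re_trace_cfc hρ₁ hσ, Qaz_eq_re_trace_cfc (hρ₁.trans (le_iff.2 hρ₁₂)) hσ]
    exact re_trace_cfc_le_of_le ((hsa _ _).conjugate_nonneg CFC.rpow_nonneg)
      ((hsa _ _).conjugate_le_conjugate (CFC.rpow_le_rpow hp (le_iff.2 hρ₁₂))) hpow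
  · have ht : (α - 1) / z ∈ Set.Icc (0 : ℝ) 1 :=
      ⟨div_nonneg (by linarith) hz.le, (div_le_one hz).2 (by linarith)⟩
    have hRker (v : Fin n → ℂ) (hv : σ₁ *ᵥ v = 0) : ρ ^ (α / (2 * z)) *ᵥ v = 0 :=
      rpow_mulVec_eq_zero hρ (div_pos (by linarith) (by positivity)).ne' (hker v hv)
    rw [Qaz_eq_re_trace_cfc_conj hρ hσ₁, Qaz_eq_re_trace_cfc_conj hρ (hσ₁.trans (le_iff.2 hσ₁₂)),
      show (1 - α) / z = -((α - 1) / z) by ring]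
    exact re_trace_cfc_le_of_le ((hsa _ _).conjugate_nonneg CFC.rpow_nonneg)
      (conj_rpow_neg_le_conj_rpow_neg hσ₁ (le_iff.2 hσ₁₂) (hsa _ _) hRker ht) hpow

/-- Order relations for `α > 1`:
(a) if `z ≥ α`, `ρ₁ ≤ ρ₂` and `supp ρ₂ ⊆ supp σ`, then `Q_{α,z}(ρ₁‖σ) ≤ Q_{α,z}(ρ₂‖σ)`;
(b) if `z ≥ α − 1`, `σ₁ ≤ σ₂` and `supp ρ ⊆ supp σ₁`, then `Q_{α,z}(ρ‖σ₁) ≥ Q_{α,z}(ρ‖σ₂)`. -/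
theorem Qaz_order_relations_alpha_gt_one (n : ℕ) (α z : ℝ) (hα : 1 < α) (hz : 0 < z)
    (ρ ρ₁ ρ₂ σ σ₁ σ₂ : Matrix (Fin n) (Fin n) ℂ)
    (hρ : ρ.PosSemidef) (hρ₁ : ρ₁.PosSemidef) (hρ₂ : ρ₂.PosSemidef)
    (hσ : σ.PosSemidef) (hσ₁ : σ₁.PosSemidef) (hσ₂ : σ₂.PosSemidef) :
    (α ≤ z → (ρ₂ - ρ₁).PosSemidef →
      (∀ v : Fin n → ℂ, σ *ᵥ v = 0 → ρ₂ *ᵥ v = 0) →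
      Qaz α z ρ₁ σ ≤ Qaz α z ρ₂ σ) ∧
    (α - 1 ≤ z → (σ₂ - σ₁).PosSemidef →
      (∀ v : Fin n → ℂ, σ₁ *ᵥ v = 0 → ρ *ᵥ v = 0) →
      Qaz α z ρ σ₂ ≤ Qaz α z ρ σ₁) :=
  Qaz_order_relations_alpha_gt_one_general n α z hα hz ρ ρ₁ ρ₂ σ σ₁ σ₂ hρ hρ₁ hσ hσ₁
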